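/- arXiv:2007.12762 — 2 statements merged into one kernel-verified Lean document; each statement's English description precedes it below -/
import Mathlib

section
/- Let X and Y be strings over an alphabet Σ and let k ≥ 0 be an integer. Suppose d'_0,…,d'_{k+1} and d_0,…,d_k are natural numbers satisfying: d'_0 = 0; for each i ∈ [0..k], max_{δ=−k}^{k} LCE_0^{X,Y}(d'_i, d'_i+δ) ≤ d_i − d'_i ≤ max_{δ=−k}^{k} LCE_k^{X,Y}(d'_i, d'_i+δ); and d'_{i+1} = min(|X|, d_i + 1) for each i ∈ [0..k]. If ED(X[0..x), Y[0..y)) = i for some i ∈ [0..k], x ∈ [0..|X|], and y ∈ [0..|Y|], then x ≤ d_i. -/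
/-- Hamming distance (number of mismatching positions) between two strings. -/
def HD {α : Type*} [DecidableEq α] (X Y : List α) : ℕ :=
  ((X.zip Y).filter fun p => p.1 ≠ p.2).length

/-- `LCE k X Y x y` is the largest `ℓ` with `HD (X[x..x+ℓ)) (Y[y..y+ℓ)) ≤ k`
(in particular `ℓ ≤ min (|X|-x) (|Y|-y)`) when `0 ≤ x ≤ |X|` and `0 ≤ y ≤ |Y|`,
and `0` otherwise. -/
def LCE {α : Type*} [DecidableEq α] (k : ℕ) (X Y : List α) (x y : ℤ) : ℕ :=
  if 0 ≤ x ∧ x ≤ X.length ∧ 0 ≤ y ∧ y ≤ Y.length then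
    Nat.findGreatest
      (fun ℓ => ℓ ≤ X.length - x.toNat ∧ ℓ ≤ Y.length - y.toNat ∧
        HD ((X.drop x.toNat).take ℓ) ((Y.drop y.toNat).take ℓ) ≤ k)
      (min (X.length - x.toNat) (Y.length - y.toNat))
  else 0

/-- Costs of the edit operations (as in the former `Mathlib.Data.List.EditDistance.Defs`). -/
structure Levenshtein.Cost (α β δ : Type*) where
  delete : α → δ
  insert : β → δ
  substitute : α → β → δ

/-- Unit costs (as in the former Mathlib `Levenshtein.defaultCost`). -/
def Levenshtein.defaultCost {α : Type*} [DecidableEq α] : Levenshtein.Cost α α ℕ where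
  delete _ := 1
  insert _ := 1
  substitute a b := if a = b then 0 else 1

/-- Levenshtein distance, by the recursion characterising the former Mathlib `levenshtein`
(its lemmas `levenshtein_nil_nil`, `levenshtein_nil_cons`, `levenshtein_cons_nil`,
`levenshtein_cons_cons`). -/
def levenshtein {α β δ : Type*} [AddZeroClass δ] [Min δ] (C : Levenshtein.Cost α β δ) :
    List α → List β → δ
  | [], [] => 0
  | [], y :: ys => C.insert y + levenshtein C [] ys
  | x :: xs, [] => C.delete x + levenshtein C xs []
  | x :: xs, y :: ys =>
    min (C.delete x + levenshtein C xs (y :: ys))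
      (min (C.insert y + levenshtein C (x :: xs) ys) (C.substitute x y + levenshtein C xs ys))

@[simp]
lemma Levenshtein.defaultCost_delete {α : Type*} [DecidableEq α] (a : α) :
    (Levenshtein.defaultCost : Levenshtein.Cost α α ℕ).delete a = 1 := rfl

@[simp]
lemma Levenshtein.defaultCost_insert {α : Type*} [DecidableEq α] (a : α) :
    (Levenshtein.defaultCost : Levenshtein.Cost α α ℕ).insert a = 1 := rfl

@[simp]
lemma Levenshtein.defaultCost_substitute {α : Type*} [DecidableEq α] (a b : α) :
    (Levenshtein.defaultCost : Levenshtein.Cost α α ℕ).substitute a b =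
      if a = b then 0 else 1 := rfl

@[simp]
lemma levenshtein_nil_nil {α β δ : Type*} [AddZeroClass δ] [Min δ]
    (C : Levenshtein.Cost α β δ) : levenshtein C [] [] = 0 := by
  rw [levenshtein]

lemma levenshtein_nil_cons {α β δ : Type*} [AddZeroClass δ] [Min δ]
    (C : Levenshtein.Cost α β δ) (y : β) (ys : List β) :
    levenshtein C [] (y :: ys) = C.insert y + levenshtein C [] ys := by
  rw [levenshtein]

lemma levenshtein_cons_nil {α β δ : Type*} [AddZeroClass δ] [Min δ]
    (C : Levenshtein.Cost α β δ) (x : α) (xs : List α) :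
    levenshtein C (x :: xs) [] = C.delete x + levenshtein C xs [] := by
  rw [levenshtein]

lemma levenshtein_cons_cons {α β δ : Type*} [AddZeroClass δ] [Min δ]
    (C : Levenshtein.Cost α β δ) (x : α) (xs : List α) (y : β) (ys : List β) :
    levenshtein C (x :: xs) (y :: ys) =
      min (C.delete x + levenshtein C xs (y :: ys))
        (min (C.insert y + levenshtein C (x :: xs) ys) (C.substitute x y + levenshtein C xs ys)) := by
  rw [levenshtein]

/-- Edit (Levenshtein) distance. -/
def ED {α : Type*} [DecidableEq α] (X Y : List α) : ℕ :=
  levenshtein Levenshtein.defaultCost X Y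

/-- An edit script with exactly `e` edit operations. -/
inductive LVEdits {α : Type*} : ℕ → List α → List α → Prop
  | nil : LVEdits 0 [] []
  | step (a) {e A B} : LVEdits e A B → LVEdits e (a :: A) (a :: B)
  | sub (a b) {e A B} : LVEdits e A B → LVEdits (e + 1) (a :: A) (b :: B)
  | del (a) {e A B} : LVEdits e A B → LVEdits (e + 1) (a :: A) B
  | ins (b) {e A B} : LVEdits e A B → LVEdits (e + 1) A (b :: B)

lemma HD_self {α : Type*} [DecidableEq α] (l : List α) : HD l l = 0 := by
  induction l with
  | nil => rfl
  | cons a l ih => simpa [HD, List.filter_cons] using ih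

lemma LVEdits.ed_le {α : Type*} [DecidableEq α] {e : ℕ} {A B : List α}
    (h : LVEdits e A B) : ED A B ≤ e := by
  unfold ED at *
  induction h with
  | nil => simp
  | step a h ih =>
    rw [levenshtein_cons_cons]
    refine le_trans (min_le_of_right_le (min_le_right _ _)) ?_
    simpa using ih
  | sub a b h ih =>
    rw [levenshtein_cons_cons]
    refine le_trans (min_le_of_right_le (min_le_right _ _)) ?_
    simp only [Levenshtein.defaultCost_substitute]
    split <;> omega
  | del a h ih =>
    rename_i e A B
    cases B with
    | nil =>
      rw [levenshtein_cons_nil]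
      simp only [Levenshtein.defaultCost_delete]
      omega
    | cons b bs =>
      rw [levenshtein_cons_cons]
      refine le_trans (min_le_left _ _) ?_
      simp only [Levenshtein.defaultCost_delete]
      omega
  | ins b h ih =>
    rename_i e A B
    cases A with
    | nil =>
      rw [levenshtein_nil_cons]
      simp only [Levenshtein.defaultCost_insert]
      omega
    | cons a as =>
      rw [levenshtein_cons_cons]
      refine le_trans (min_le_of_right_le (min_le_left _ _)) ?_
      simp only [Levenshtein.defaultCost_insert]
      omega

lemma lvedits_ed {α : Type*} [DecidableEq α] (A B : List α) : LVEdits (ED A B) A B := by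
  unfold ED
  induction A generalizing B with
  | nil =>
    induction B with
    | nil => simpa using LVEdits.nil
    | cons b B ihB =>
      rw [levenshtein_nil_cons]
      simp only [Levenshtein.defaultCost_insert]
      rw [Nat.add_comm 1]
      exact LVEdits.ins b ihB
  | cons a A ihA =>
    induction B with
    | nil =>
      rw [levenshtein_cons_nil]
      simp only [Levenshtein.defaultCost_delete]
      rw [Nat.add_comm 1]
      exact LVEdits.del a (ihA [])
    | cons b B ihB =>
      rw [levenshtein_cons_cons]
      simp only [Levenshtein.defaultCost_delete, Levenshtein.defaultCost_insert,
        Levenshtein.defaultCost_substitute]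
      rcases min_cases (1 + levenshtein Levenshtein.defaultCost A (b :: B))
        (min (1 + levenshtein Levenshtein.defaultCost (a :: A) B)
          ((if a = b then 0 else 1) + levenshtein Levenshtein.defaultCost A B)) with
        ⟨h, -⟩ | ⟨h, -⟩
      · rw [h, Nat.add_comm 1]
        exact LVEdits.del a (ihA (b :: B))
      · rw [h]
        rcases min_cases (1 + levenshtein Levenshtein.defaultCost (a :: A) B)
          ((if a = b then 0 else 1) + levenshtein Levenshtein.defaultCost A B) with
          ⟨h2, -⟩ | ⟨h2, -⟩
        · rw [h2, Nat.add_comm 1]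
          exact LVEdits.ins b ihB
        · rw [h2]
          by_cases hab : a = b
          · subst hab
            rw [if_pos rfl, Nat.zero_add]
            exact LVEdits.step a (ihA B)
          · rw [if_neg hab, Nat.add_comm 1]
            exact LVEdits.sub a b (ihA B)

lemma LVEdits.len {α : Type*} {e : ℕ} {A B : List α} (h : LVEdits e A B) :
    A.length ≤ B.length + e ∧ B.length ≤ A.length + e := by
  induction h <;> simp only [List.length_cons, List.length_nil] at * <;> omega

lemma LVEdits.eq_of_zero {α : Type*} {e : ℕ} {A B : List α} (h : LVEdits e A B)
    (he : e = 0) : A = B := by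
  induction h with
  | nil => rfl
  | step a h ih => rw [ih he]
  | sub a b h ih => exact absurd he (Nat.succ_ne_zero _)
  | del a h ih => exact absurd he (Nat.succ_ne_zero _)
  | ins b h ih => exact absurd he (Nat.succ_ne_zero _)

lemma LVEdits.decomp {α : Type*} {e : ℕ} {A B : List α} (h : LVEdits e A B) (he : 1 ≤ e) :
    ∃ (A₁ B₁ S : List α) (j : ℕ), j + 1 ≤ e ∧ LVEdits j A₁ B₁ ∧
      ((∃ a b, A = A₁ ++ a :: S ∧ B = B₁ ++ b :: S) ∨
       (∃ a, A = A₁ ++ a :: S ∧ B = B₁ ++ S) ∨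
       (∃ b, A = A₁ ++ S ∧ B = B₁ ++ b :: S)) := by
  induction h with
  | nil => omega
  | step a h ih =>
    obtain ⟨A₁, B₁, S, j, hj, hE, hc⟩ := ih he
    refine ⟨a :: A₁, a :: B₁, S, j, hj, LVEdits.step a hE, ?_⟩
    rcases hc with ⟨a', b', h1, h2⟩ | ⟨a', h1, h2⟩ | ⟨b', h1, h2⟩
    · exact Or.inl ⟨a', b', by rw [h1]; rfl, by rw [h2]; rfl⟩
    · exact Or.inr (Or.inl ⟨a', by rw [h1]; rfl, by rw [h2]; rfl⟩)
    · exact Or.inr (Or.inr ⟨b', by rw [h1]; rfl, by rw [h2]; rfl⟩)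
  | sub a b h ih =>
    rename_i e' A' B'
    by_cases h0 : e' = 0
    · subst h0
      have hAB := h.eq_of_zero rfl
      exact ⟨[], [], A', 0, le_refl 1, LVEdits.nil,
        Or.inl ⟨a, b, by simp, by rw [hAB]; simp⟩⟩
    · obtain ⟨A₁, B₁, S, j, hj, hE, hc⟩ := ih (by omega)
      refine ⟨a :: A₁, b :: B₁, S, j + 1, by omega, LVEdits.sub a b hE, ?_⟩
      rcases hc with ⟨a', b', h1, h2⟩ | ⟨a', h1, h2⟩ | ⟨b', h1, h2⟩
      · exact Or.inl ⟨a', b', by rw [h1]; rfl, by rw [h2]; rfl⟩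
      · exact Or.inr (Or.inl ⟨a', by rw [h1]; rfl, by rw [h2]; rfl⟩)
      · exact Or.inr (Or.inr ⟨b', by rw [h1]; rfl, by rw [h2]; rfl⟩)
  | del a h ih =>
    rename_i e' A' B'
    by_cases h0 : e' = 0
    · subst h0
      have hAB := h.eq_of_zero rfl
      exact ⟨[], [], B', 0, le_refl 1, LVEdits.nil,
        Or.inr (Or.inl ⟨a, by rw [hAB]; simp, by simp⟩)⟩
    · obtain ⟨A₁, B₁, S, j, hj, hE, hc⟩ := ih (by omega)
      refine ⟨a :: A₁, B₁, S, j + 1, by omega, LVEdits.del a hE, ?_⟩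
      rcases hc with ⟨a', b', h1, h2⟩ | ⟨a', h1, h2⟩ | ⟨b', h1, h2⟩
      · exact Or.inl ⟨a', b', by rw [h1]; rfl, h2⟩
      · exact Or.inr (Or.inl ⟨a', by rw [h1]; rfl, h2⟩)
      · exact Or.inr (Or.inr ⟨b', by rw [h1]; rfl, h2⟩)
  | ins b h ih =>
    rename_i e' A' B'
    by_cases h0 : e' = 0
    · subst h0
      have hAB := h.eq_of_zero rfl
      exact ⟨[], [], A', 0, le_refl 1, LVEdits.nil,
        Or.inr (Or.inr ⟨b, by simp, by rw [hAB]; simp⟩)⟩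
    · obtain ⟨A₁, B₁, S, j, hj, hE, hc⟩ := ih (by omega)
      refine ⟨A₁, b :: B₁, S, j + 1, by omega, LVEdits.ins b hE, ?_⟩
      rcases hc with ⟨a', b', h1, h2⟩ | ⟨a', h1, h2⟩ | ⟨b', h1, h2⟩
      · exact Or.inl ⟨a', b', h1, by rw [h2]; rfl⟩
      · exact Or.inr (Or.inl ⟨a', h1, by rw [h2]; rfl⟩)
      · exact Or.inr (Or.inr ⟨b', h1, by rw [h2]; rfl⟩)

lemma LCE_le {α : Type*} [DecidableEq α] (k : ℕ) (X Y : List α) (x y : ℤ) :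
    LCE k X Y x y ≤ X.length - x.toNat := by
  unfold LCE
  split
  · exact (Nat.findGreatest_le _).trans (min_le_left _ _)
  · exact Nat.zero_le _

lemma le_LCE_zero {α : Type*} [DecidableEq α] (X Y : List α) (p q ℓ : ℕ)
    (hX : p + ℓ ≤ X.length) (hY : q + ℓ ≤ Y.length)
    (heq : (X.drop p).take ℓ = (Y.drop q).take ℓ) :
    ℓ ≤ LCE 0 X Y (p : ℤ) (q : ℤ) := by
  unfold LCE
  have hc : (0 : ℤ) ≤ (p : ℤ) ∧ (p : ℤ) ≤ X.length ∧ (0 : ℤ) ≤ (q : ℤ) ∧ (q : ℤ) ≤ Y.length := by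
    refine ⟨by positivity, ?_, by positivity, ?_⟩ <;>omega
  rw [if_pos hc]
  simp only [Int.toNat_natCast]
  apply Nat.le_findGreatest
  · omega
  · refine ⟨by omega, by omega, ?_⟩
    rw [heq, HD_self]

lemma take_decomp {α : Type*} (Z A R : List α) (x : ℕ) (hx : x ≤ Z.length)
    (h : Z.take x = A ++ R) : A = Z.take A.length ∧ A.length + R.length = x := by
  have hlen : A.length + R.length = x := by
    have := congrArg List.length h
    simp only [List.length_take, List.length_append] at this
    omega
  refine ⟨?_, hlen⟩
  have h2 := congrArg (List.take A.length) h
  rw [List.take_left, List.take_take] at h2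
  rw [show min A.length x = A.length by omega] at h2
  exact h2.symm

lemma suffix_match {α : Type*} (Z A S : List α) (x : ℕ) (hx : x ≤ Z.length)
    (h : Z.take x = A ++ S) : (Z.drop A.length).take S.length = S := by
  have hlen := (take_decomp Z A S x hx h).2
  have h2 := congrArg (List.drop A.length) h
  rw [List.drop_take, List.drop_left] at h2
  rw [show x - A.length = S.length by omega] at h2
  exact h2

theorem stmt2 {α : Type*} [DecidableEq α] (X Y : List α) (k : ℕ)
    (d' d : ℕ → ℕ)
    (h0 : d' 0 = 0)
    (hlow : ∀ i ≤ k,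
      d' i + (Finset.Icc (-(k : ℤ)) (k : ℤ)).sup
        (fun δ => LCE 0 X Y (d' i) ((d' i : ℤ) + δ)) ≤ d i)
    (hhigh : ∀ i ≤ k,
      d i ≤ d' i + (Finset.Icc (-(k : ℤ)) (k : ℤ)).sup
        (fun δ => LCE k X Y (d' i) ((d' i : ℤ) + δ)))
    (hstep : ∀ i ≤ k, d' (i + 1) = min X.length (d i + 1)) :
    ∀ i ≤ k, ∀ x ≤ X.length, ∀ y ≤ Y.length,
      ED (X.take x) (Y.take y) = i → x ≤ d i := by
  -- d' is bounded by |X|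
  have hd'le : ∀ j, j ≤ k + 1 → d' j ≤ X.length := by
    intro j hj
    cases j with
    | zero => simp [h0]
    | succ n => rw [hstep n (by omega)]; exact min_le_left _ _
  -- d is bounded by |X|
  have hdle : ∀ j, j ≤ k → d j ≤ X.length := by
    intro j hj
    have h1 := hhigh j hj
    have h2 : (Finset.Icc (-(k : ℤ)) (k : ℤ)).sup
        (fun δ => LCE k X Y (d' j) ((d' j : ℤ) + δ)) ≤ X.length - d' j := by
      apply Finset.sup_le
      intro δ _
      have := LCE_le k X Y ((d' j : ℕ) : ℤ) ((d' j : ℤ) + δ)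
      simpa using this
    have h3 := hd'le j (by omega)
    omega
  -- d is monotone
  have hmono : ∀ j i, j ≤ i → i ≤ k → d j ≤ d i := by
    intro j i hji hik
    induction i with
    | zero => have : j = 0 := by omega
              subst this; exact le_refl _
    | succ n ih =>
      rcases Nat.lt_or_ge j (n + 1) with hc | hc
      · have h1 : d j ≤ d n := ih (by omega) (by omega)
        have h2 := hlow (n + 1) hik
        have h3 := hstep n (by omega)
        have h4 := hdle n (by omega)
        omega
      · have : j = n + 1 := by omega
        subst this; exact le_refl _
  -- key step lemma
  have key : ∀ e, e + 1 ≤ k → ∀ x ≤ X.length, ∀ y ≤ Y.length, ∀ u v m : ℕ,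
      u + m = x → v + m = y → u ≤ d e + 1 →
      x ≤ y + (e + 1) → y ≤ x + (e + 1) →
      (X.drop u).take m = (Y.drop v).take m → x ≤ d (e + 1) := by
    intro e hek x hx y hy u v m hu hv hud hxy hyx hmatch
    have hp : d' (e + 1) = min X.length (d e + 1) := hstep e (by omega)
    have hlow1 := hlow (e + 1) hek
    rcases le_or_gt x (d' (e + 1)) with hxp | hxp
    · omega
    · have hup : u ≤ d' (e + 1) := by omega
      have hshift : (X.drop (d' (e + 1))).take (x - d' (e + 1)) =
          (Y.drop (v + (d' (e + 1) - u))).take (x - d' (e + 1)) := by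
        have h1 := congrArg (List.drop (d' (e + 1) - u)) hmatch
        rw [List.drop_take, List.drop_take, List.drop_drop, List.drop_drop] at h1
        rw [show u + (d' (e + 1) - u) = d' (e + 1) by omega,
          show m - (d' (e + 1) - u) = x - d' (e + 1) by omega] at h1
        exact h1
      have hLCE : x - d' (e + 1) ≤
          LCE 0 X Y ((d' (e + 1) : ℕ) : ℤ) (((v + (d' (e + 1) - u) : ℕ)) : ℤ) :=
        le_LCE_zero X Y _ _ _ (by omega) (by omega) hshift
      have hmem : (((v + (d' (e + 1) - u) : ℕ)) : ℤ) - ((d' (e + 1) : ℕ) : ℤ) ∈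
          Finset.Icc (-(k : ℤ)) (k : ℤ) := by
        rw [Finset.mem_Icc]
        omega
      have hsup : LCE 0 X Y ((d' (e + 1) : ℕ) : ℤ)
          (((d' (e + 1) : ℕ) : ℤ) + ((((v + (d' (e + 1) - u) : ℕ)) : ℤ) - ((d' (e + 1) : ℕ) : ℤ)))
          ≤ (Finset.Icc (-(k : ℤ)) (k : ℤ)).sup
            (fun δ => LCE 0 X Y (d' (e + 1)) ((d' (e + 1) : ℤ) + δ)) :=
        Finset.le_sup (f := fun δ => LCE 0 X Y (d' (e + 1)) ((d' (e + 1) : ℤ) + δ)) hmem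
      rw [show ((d' (e + 1) : ℕ) : ℤ) + ((((v + (d' (e + 1) - u) : ℕ)) : ℤ) - ((d' (e + 1) : ℕ) : ℤ))
          = (((v + (d' (e + 1) - u) : ℕ)) : ℤ) from by ring] at hsup
      omega
  intro i
  induction i using Nat.strong_induction_on with
  | _ i IH =>
    intro hik x hx y hy hED
    have hEd : LVEdits i (X.take x) (Y.take y) := by
      have h := lvedits_ed (X.take x) (Y.take y)
      rwa [hED] at h
    have hlx : (X.take x).length = x := by rw [List.length_take]; omega
    have hly : (Y.take y).length = y := by rw [List.length_take]; omega
    have hlen := hEd.len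
    rw [hlx, hly] at hlen
    rcases Nat.eq_zero_or_pos i with hi0 | hi1
    · -- base case
      subst hi0
      have hAB : X.take x = Y.take y := hEd.eq_of_zero rfl
      have hxy : x = y := by
        have := congrArg List.length hAB
        rwa [hlx, hly] at this
      subst hxy
      have hL : x ≤ LCE 0 X Y ((d' 0 : ℕ) : ℤ) ((d' 0 : ℕ) : ℤ) := by
        apply le_LCE_zero X Y (d' 0) (d' 0) x (by omega) (by omega)
        rw [h0]
        simpa using hAB
      have hmem : ((d' 0 : ℕ) : ℤ) - ((d' 0 : ℕ) : ℤ) ∈ Finset.Icc (-(k : ℤ)) (k : ℤ) := by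
        rw [Finset.mem_Icc]; omega
      have hsup : LCE 0 X Y ((d' 0 : ℕ) : ℤ)
          (((d' 0 : ℕ) : ℤ) + (((d' 0 : ℕ) : ℤ) - ((d' 0 : ℕ) : ℤ)))
          ≤ (Finset.Icc (-(k : ℤ)) (k : ℤ)).sup
            (fun δ => LCE 0 X Y (d' 0) ((d' 0 : ℤ) + δ)) :=
        Finset.le_sup (f := fun δ => LCE 0 X Y (d' 0) ((d' 0 : ℤ) + δ)) hmem
      rw [show ((d' 0 : ℕ) : ℤ) + (((d' 0 : ℕ) : ℤ) - ((d' 0 : ℕ) : ℤ)) = ((d' 0 : ℕ) : ℤ)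
        from by ring] at hsup
      have hlow0 := hlow 0 (by omega)
      omega
    · -- inductive case: i = e + 1
      obtain ⟨e, rfl⟩ : ∃ e, i = e + 1 := ⟨i - 1, by omega⟩
      obtain ⟨A₁, B₁, S, j, hj, hE1, hcase⟩ := hEd.decomp (by omega)
      -- handle the three cases uniformly
      have main : ∀ (TA TB : List α), X.take x = A₁ ++ TA ++ S → Y.take y = B₁ ++ TB ++ S →
          TA.length ≤ 1 → TB.length ≤ 1 → x ≤ d (e + 1) := by
        intro TA TB hXdec hYdec hTA hTB
        have hXd := take_decomp X (A₁ ++ TA) S x hx (by rw [hXdec])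
        have hYd := take_decomp Y (B₁ ++ TB) S y hy (by rw [hYdec])
        have hA1 := take_decomp X A₁ (TA ++ S) x hx (by rw [hXdec, List.append_assoc])
        have hB1 := take_decomp Y B₁ (TB ++ S) y hy (by rw [hYdec, List.append_assoc])
        have hSX := suffix_match X (A₁ ++ TA) S x hx (by rw [hXdec])
        have hSY := suffix_match Y (B₁ ++ TB) S y hy (by rw [hYdec])
        -- IH applied to (A₁, B₁)
        have hj' : ED A₁ B₁ ≤ j := hE1.ed_le
        have hx0 : A₁.length ≤ d (ED A₁ B₁) := by
          apply IH (ED A₁ B₁) (by omega) (by omega) A₁.length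
            (by have := hA1.2; simp at this ⊢; omega) B₁.length
            (by have := hB1.2; simp at this ⊢; omega)
          rw [← hA1.1, ← hB1.1]
        have hx0e : A₁.length ≤ d e := hx0.trans (hmono _ e (by omega) (by omega))
        have hulen : (A₁ ++ TA).length + S.length = x := hXd.2
        have hvlen : (B₁ ++ TB).length + S.length = y := hYd.2
        apply key e hik x hx y hy (A₁ ++ TA).length (B₁ ++ TB).length S.length
          hulen hvlen (by simp at hulen hvlen ⊢; omega) (by omega) (by omega)
        rw [hSX, hSY]
      rcases hcase with ⟨a, b, h1, h2⟩ | ⟨a, h1, h2⟩ | ⟨b, h1, h2⟩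
      · exact main [a] [b] (by rw [h1]; simp) (by rw [h2]; simp) (by simp) (by simp)
      · exact main [a] [] (by rw [h1]; simp) (by rw [h2]; simp) (by simp) (by simp)
      · exact main [] [b] (by rw [h1]; simp) (by rw [h2]; simp) (by simp) (by simp)
end

section
/- Let X, X', and Y be strings over an alphabet Σ, let j ∈ [0..|Y|−|X|] be an integer, and let d = HD(X, Y[j..j+|X|)). Then for every integer k ≥ 0: if k < d, then LCE_k^{XX',Y}(0,j) = LCE_k^{X,Y}(0,j); and if k ≥ d, then LCE_k^{XX',Y}(0,j) = |X| + LCE_{k−d}^{X',Y}(0, j+|X|), where XX' denotes the concatenation of X and X'. -/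
lemma take_zip {α : Type*} (A B : List α) (n : ℕ) :
    (A.zip B).take n = (A.take n).zip (B.take n) := by
  simp [List.zip, List.take_zipWith]

lemma HD_take_mono {α : Type*} [DecidableEq α] (A B : List α) {ℓ m : ℕ} (h : ℓ ≤ m) :
    HD (A.take ℓ) (B.take ℓ) ≤ HD (A.take m) (B.take m) := by
  unfold HD
  rw [← take_zip, ← take_zip]
  have hsub : List.Sublist ((A.zip B).take ℓ) ((A.zip B).take m) := by
    rw [show ℓ = min ℓ m from (Nat.min_eq_left h).symm, ← List.take_take]
    exact List.take_sublist _ _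
  exact ((hsub.filter _).length_le)

lemma HD_append {α : Type*} [DecidableEq α] (A C B₁ B₂ : List α) (h : A.length = B₁.length) :
    HD (A ++ C) (B₁ ++ B₂) = HD A B₁ + HD C B₂ := by
  unfold HD
  rw [List.zip_append h, List.filter_append, List.length_append]

lemma lce_lt_aux {α : Type*} [DecidableEq α] (A C B : List α) (hAB : A.length ≤ B.length)
    (k : ℕ) (hk : k < HD A (B.take A.length)) :
    Nat.findGreatest
      (fun ℓ => ℓ ≤ (A ++ C).length ∧ ℓ ≤ B.length ∧ HD ((A ++ C).take ℓ) (B.take ℓ) ≤ k)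
      (min (A ++ C).length B.length)
    = Nat.findGreatest
      (fun ℓ => ℓ ≤ A.length ∧ ℓ ≤ B.length ∧ HD (A.take ℓ) (B.take ℓ) ≤ k)
      (min A.length B.length) := by
  set Q : ℕ → Prop := fun ℓ => ℓ ≤ A.length ∧ ℓ ≤ B.length ∧ HD (A.take ℓ) (B.take ℓ) ≤ k with hQ
  set m := Nat.findGreatest Q (min A.length B.length) with hm
  have hmle : m ≤ min A.length B.length := Nat.findGreatest_le _
  have hmspec := (Nat.findGreatest_eq_iff.mp hm.symm)
  rw [Nat.findGreatest_eq_iff]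
  refine ⟨?_, ?_, ?_⟩
  · simp only [List.length_append, le_min_iff]
    omega
  · intro hm0
    obtain ⟨h1, h2, h3⟩ := hmspec.2.1 hm0
    refine ⟨by simp; omega, h2, ?_⟩
    rwa [List.take_append_of_le_length h1]
  · intro l hml hl ⟨h1, h2, h3⟩
    rcases le_or_gt l A.length with hla | hla
    · exact hmspec.2.2 hml (by omega)
        ⟨hla, h2, by rwa [← List.take_append_of_le_length hla]⟩
    · have h4 : HD ((A ++ C).take A.length) (B.take A.length) ≤
          HD ((A ++ C).take l) (B.take l) := HD_take_mono _ _ hla.le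
      rw [List.take_left] at h4
      omega

lemma lce_ge_aux {α : Type*} [DecidableEq α] (A C B : List α) (hAB : A.length ≤ B.length)
    (k : ℕ) (hk : HD A (B.take A.length) ≤ k) :
    Nat.findGreatest
      (fun ℓ => ℓ ≤ (A ++ C).length ∧ ℓ ≤ B.length ∧ HD ((A ++ C).take ℓ) (B.take ℓ) ≤ k)
      (min (A ++ C).length B.length)
    = A.length + Nat.findGreatest
      (fun ℓ => ℓ ≤ C.length ∧ ℓ ≤ B.length - A.length ∧
        HD (C.take ℓ) ((B.drop A.length).take ℓ) ≤ k - HD A (B.take A.length))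
      (min C.length (B.length - A.length)) := by
  set d := HD A (B.take A.length) with hd
  set Q : ℕ → Prop := fun ℓ => ℓ ≤ C.length ∧ ℓ ≤ B.length - A.length ∧
      HD (C.take ℓ) ((B.drop A.length).take ℓ) ≤ k - d with hQ
  set m := Nat.findGreatest Q (min C.length (B.length - A.length)) with hm
  have hmle : m ≤ min C.length (B.length - A.length) := Nat.findGreatest_le _
  have hmspec := (Nat.findGreatest_eq_iff.mp hm.symm)
  have hlenB : (B.take A.length).length = A.length := by
    rw [List.length_take]; omega
  have key : ∀ n, HD ((A ++ C).take (A.length + n)) (B.take (A.length + n))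
      = d + HD (C.take n) ((B.drop A.length).take n) := by
    intro n
    rw [List.take_append, Nat.add_sub_cancel_left, List.take_of_length_le (by omega : A.length ≤ A.length + n), List.take_add, HD_append _ _ _ _ hlenB.symm, ← hd]
  rw [Nat.findGreatest_eq_iff]
  refine ⟨?_, ?_, ?_⟩
  · simp only [List.length_append, le_min_iff]
    omega
  · intro _
    have hCm : HD (C.take m) ((B.drop A.length).take m) ≤ k - d := by
      rcases Nat.eq_zero_or_pos m with h0 | h0
      · simp [h0, HD]
      · exact (hmspec.2.1 (by omega)).2.2
    refine ⟨by simp; omega, by omega, ?_⟩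
    rw [key]
    omega
  · intro l hml hl hP
    obtain ⟨h1, h2, h3⟩ := hP
    simp only [List.length_append, le_min_iff] at hl h1
    obtain ⟨n, rfl⟩ : ∃ n, l = A.length + n := ⟨l - A.length, by omega⟩
    rw [key] at h3
    have g1 : m < n := by omega
    have g2 : n ≤ min C.length (B.length - A.length) := by omega
    have g3 : n ≤ C.length := by omega
    have g4 : n ≤ B.length - A.length := by omega
    have g5 : HD (C.take n) ((B.drop A.length).take n) ≤ k - d := by omega
    exact hmspec.2.2 g1 g2 ⟨g3, g4, g5⟩

theorem stmt7 {α : Type*} [DecidableEq α] (X X' Y : List α) (j : ℕ)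
    (hj : j + X.length ≤ Y.length) (d : ℕ)
    (hd : d = HD X ((Y.drop j).take X.length)) :
    ∀ k : ℕ,
      (k < d → LCE k (X ++ X') Y 0 (j : ℤ) = LCE k X Y 0 (j : ℤ)) ∧
      (d ≤ k → LCE k (X ++ X') Y 0 (j : ℤ) =
        X.length + LCE (k - d) X' Y 0 ((j : ℤ) + X.length)) := by
  intro k
  have hjY : j ≤ Y.length := by omega
  have hAB : X.length ≤ (Y.drop j).length := by rw [List.length_drop]; omega
  have conv1 : ∀ (W : List α) (κ : ℕ), LCE κ W Y 0 (j : ℤ) =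
      Nat.findGreatest (fun ℓ => ℓ ≤ W.length ∧ ℓ ≤ (Y.drop j).length ∧
        HD (W.take ℓ) ((Y.drop j).take ℓ) ≤ κ) (min W.length (Y.drop j).length) := by
    intro W κ
    rw [LCE, if_pos ⟨le_refl 0, by positivity, by positivity, by exact_mod_cast hjY⟩]
    simp [List.length_drop]
  have conv2 : LCE (k - d) X' Y 0 ((j : ℤ) + X.length) =
      Nat.findGreatest (fun ℓ => ℓ ≤ X'.length ∧ ℓ ≤ (Y.drop j).length - X.length ∧
        HD (X'.take ℓ) (((Y.drop j).drop X.length).take ℓ) ≤ k - d)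
        (min X'.length ((Y.drop j).length - X.length)) := by
    rw [LCE, if_pos ⟨le_refl 0, by positivity, by positivity, by
      have : ((j + X.length : ℕ) : ℤ) ≤ (Y.length : ℤ) := by exact_mod_cast hj
      push_cast at this; exact this⟩]
    rw [show ((j : ℤ) + (X.length : ℤ)).toNat = j + X.length by omega]
    simp [List.length_drop, Nat.sub_sub, List.drop_drop]
  constructor
  · intro hk
    rw [conv1 (X ++ X') k, conv1 X k]
    exact lce_lt_aux X X' (Y.drop j) hAB k (by rw [hd] at hk; exact hk)
  · intro hk
    rw [conv1 (X ++ X') k, conv2]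
    have h := lce_ge_aux X X' (Y.drop j) hAB k (by rw [hd] at hk; exact hk)
    rw [← hd] at h
    exact h
end
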